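/- arXiv:2105.10364 — 10 statements merged into one kernel-verified Lean document; each statement's English description precedes it below -/
import Mathlib

section
/- If (a, m, x, y, z) is a solution in positive integers of (2am+1)^x + (2m)^y = (2am-1)^z with m > 1 and x odd, then y = v_2(a)/(v_2(m)+1) + 1, where v_2 denotes the 2-adic valuation. -/
/-!
Put `N = 2am`. Modulo `2m` the equation reads `1 ≡ (-1)^z`, so `z` is even, and then modulo `N²`
the binomial theorem gives `(2m)^y ≡ -(x + z) N`. Hence `(2m)^y = N c` with `c ≡ -(x + z) (mod N)`,
and `c` is odd because `x + z` is. Comparing 2-adic valuations of `(2m)^y = 2am c` gives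
`y (v₂ m + 1) = v₂ a + v₂ m + 1`, which is the claim.
-/

namespace Int

theorem sq_dvd_one_add_pow_sub_mul_sub_one (n : ℤ) (k : ℕ) : n ^ 2 ∣ (1 + n) ^ k - n * k - 1 := by
  simpa using sq_dvd_add_pow_sub_sub n 1 k

theorem even_of_add_pow_eq {N w d : ℤ} {x z : ℕ} (hdN : d ∣ N) (hdw : d ∣ w) (hd : ¬ d ∣ 2)
    (h : (N + 1) ^ x + w = (N - 1) ^ z) : Even z := by
  have hN : N ≡ 0 [ZMOD d] := modEq_zero_iff_dvd.mpr hdN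
  have hmod : 1 ≡ (-1) ^ z [ZMOD d] := by
    have := ((hN.add_right 1).pow x).add (modEq_zero_iff_dvd.mpr hdw)
    rw [h] at this
    simpa using this.symm.trans ((hN.sub_right 1).pow z)
  rcases Nat.even_or_odd z with hz | hz
  · exact hz
  · rw [hz.neg_one_pow] at hmod
    exact absurd (by simpa using hmod.symm.dvd) hd

theorem sq_dvd_add_mul_of_add_pow_eq {N w : ℤ} {x z : ℕ} (hz : Even z)
    (h : (N + 1) ^ x + w = (N - 1) ^ z) : N ^ 2 ∣ w + (x + z) * N := by
  have hx := sq_dvd_one_add_pow_sub_mul_sub_one N x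
  have hz' := sq_dvd_one_add_pow_sub_mul_sub_one (-N) z
  rw [show (1 + -N) ^ z = (N - 1) ^ z by rw [← hz.neg_pow]; ring, neg_sq] at hz'
  have hsplit : w + (x + z) * N = ((N - 1) ^ z - -N * z - 1) - ((1 + N) ^ x - N * x - 1) := by
    rw [← h]; ring
  exact hsplit ▸ hz'.sub hx

theorem odd_of_add_mul_pow_eq {N c : ℤ} {x z : ℕ} (hN : Even N) (hN0 : N ≠ 0) (hz : Even z)
    (hxz : Odd (x + z)) (h : (N + 1) ^ x + N * c = (N - 1) ^ z) : Odd c := by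
  have hdvd : N ∣ c + (x + z) := by
    have := sq_dvd_add_mul_of_add_pow_eq hz h
    rwa [sq, show N * c + (x + z) * N = N * (c + (x + z)) by ring,
      mul_dvd_mul_iff_left hN0] at this
  have heven : Even (c + (x + z)) := even_iff_two_dvd.mpr (hN.two_dvd.trans hdvd)
  have hxz' : Odd ((x : ℤ) + z) := by exact_mod_cast hxz
  simpa using heven.sub_odd hxz'

end Int

theorem mul_padicValNat_add_one_eq {p a m c y : ℕ} [Fact p.Prime] (ha : a ≠ 0) (hm : m ≠ 0)
    (hc : ¬ p ∣ c) (h : (p * m) ^ y = p * a * m * c) :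
    y * (padicValNat p m + 1) = padicValNat p a + padicValNat p m + 1 := by
  have hp : p ≠ 0 := (Fact.out : p.Prime).ne_zero
  have hc0 : c ≠ 0 := by rintro rfl; exact hc (dvd_zero p)
  have := congrArg (padicValNat p) h
  rw [padicValNat.pow, padicValNat.mul hp hm, padicValNat.mul (by positivity) hc0,
    padicValNat.mul (by positivity) hm, padicValNat.mul hp ha,
    padicValNat.eq_zero_of_not_dvd hc, padicValNat_self, add_zero] at this
  linarith

theorem eq_div_add_one_of_mul_add_one_eq {y s t : ℕ} (h : y * (s + 1) = t + s + 1) :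
    y = t / (s + 1) + 1 := by
  obtain ⟨k, rfl⟩ : ∃ k, y = k + 1 :=
    Nat.exists_eq_add_one.mpr (Nat.pos_of_ne_zero (by rintro rfl; omega))
  rw [show t = k * (s + 1) by linarith, Nat.mul_div_cancel _ s.succ_pos]

theorem stmt2_general (a m x y z : ℕ) (ha : 0 < a) (hm : 1 < m) (hy : 0 < y)
    (hxodd : Odd x) (h : (2*a*m+1)^x + (2*m)^y = (2*a*m-1)^z) :
    y = padicValNat 2 a / (padicValNat 2 m + 1) + 1 := by
  have hN : 1 ≤ 2 * a * m := by nlinarith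
  have hZ : (((2 * a * m : ℕ) : ℤ) + 1) ^ x + (((2 * m) ^ y : ℕ) : ℤ)
      = (((2 * a * m : ℕ) : ℤ) - 1) ^ z := by
    have := congrArg (Nat.cast : ℕ → ℤ) h
    push_cast [Nat.cast_sub hN] at this ⊢
    exact this
  have hzeven : Even z := by
    refine Int.even_of_add_pow_eq (d := ((2 * m : ℕ) : ℤ)) ?_ ?_ ?_ hZ
    · exact Int.natCast_dvd_natCast.mpr ⟨a, by ring⟩
    · exact Int.natCast_dvd_natCast.mpr (dvd_pow_self _ hy.ne')
    · have : ¬ 2 * m ∣ 2 := fun hd => by have := Nat.le_of_dvd two_pos hd; omega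
      exact_mod_cast this
  obtain ⟨c, hc⟩ : 2 * a * m ∣ (2 * m) ^ y := by
    have := Int.sq_dvd_add_mul_of_add_pow_eq hzeven hZ
    exact Int.natCast_dvd_natCast.mp <|
      (dvd_add_left (dvd_mul_left _ _)).mp ((dvd_pow_self _ two_ne_zero).trans this)
  rw [hc, Nat.cast_mul (2 * a * m) c] at hZ
  have hcodd : Odd c := by
    have := Int.odd_of_add_mul_pow_eq ⟨(a * m : ℤ), by push_cast; ring⟩
      (Nat.cast_ne_zero.mpr (Nat.one_le_iff_ne_zero.mp hN)) hzeven (hxodd.add_even hzeven) hZ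
    exact_mod_cast this
  exact eq_div_add_one_of_mul_add_one_eq <| mul_padicValNat_add_one_eq (p := 2) ha.ne' (by omega)
    hcodd.not_two_dvd_nat hc

theorem stmt2 (a m x y z : ℕ) (ha : 0 < a) (hm : 1 < m) (hx : 0 < x) (hy : 0 < y)
    (hz : 0 < z) (hxodd : Odd x) (h : (2*a*m+1)^x + (2*m)^y = (2*a*m-1)^z) :
    y = padicValNat 2 a / (padicValNat 2 m + 1) + 1 :=
  stmt2_general a m x y z ha hm hy hxodd h
end

section
/- If (a, m, x, y, z) is a solution in positive integers of (2am+1)^x + (2m)^y = (2am-1)^z with m > 1, then 2am ≥ (2m)^y · (x+z)^{-y}. -/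
/-!
Write `U = 2am` and `M = 2m`, so that `M ∣ U` and `M > 2`. Modulo `M` the equation reads
`1 = (-1)^z`, hence `z` is even. Modulo `U²` the binomial theorem then gives
`1 + xU + M^y ≡ 1 - zU`, i.e. `U² ∣ M^y + (x+z)U`. Comparing `p`-adic valuations turns this
into `M^y ∣ U (x+z)^y`, which is the claimed bound.
-/

lemma even_of_add_one_pow_add_pow_eq_sub_one_pow {U M : ℤ} {x y z : ℕ} (hMU : M ∣ U)
    (hM : 2 < M) (hy : y ≠ 0) (h : (U + 1) ^ x + M ^ y = (U - 1) ^ z) : Even z := by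
  lift M to ℕ using by omega
  have : Fact (2 < M) := ⟨by omega⟩
  have hU : (U : ZMod M) = 0 := (ZMod.intCast_zmod_eq_zero_iff_dvd U M).mpr hMU
  have hmod := congrArg (Int.cast : ℤ → ZMod M) h
  push_cast [hU] at hmod
  simp only [ZMod.natCast_self, zero_pow hy, zero_add, one_pow, add_zero, zero_sub] at hmod
  exact (neg_one_pow_eq_one_iff_even ZMod.neg_one_ne_one).mp hmod.symm

lemma sq_dvd_pow_add_mul_of_add_one_pow_add_pow_eq_sub_one_pow {R : Type*} [CommRing R]
    {U M : R} {x y z : ℕ} (hz : Even z) (h : (U + 1) ^ x + M ^ y = (U - 1) ^ z) :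
    U ^ 2 ∣ M ^ y + (x + z) * U := by
  have hx_binom := sq_dvd_add_pow_sub_sub U 1 x
  have hz_binom := sq_dvd_add_pow_sub_sub (-U) 1 z
  rw [neg_sq] at hz_binom
  have hflip : (U - 1) ^ z = (1 + -U) ^ z := by
    rw [← hz.neg_pow]; ring
  have e : M ^ y + (x + z) * U
      = ((1 + -U) ^ z - 1 ^ (z - 1) * -U * z - 1 ^ z)
        - ((1 + U) ^ x - 1 ^ (x - 1) * U * x - 1 ^ x) := by
    rw [← hflip, ← h]; ring
  rw [e]
  exact dvd_sub hz_binom hx_binom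

lemma pow_dvd_mul_pow_of_sq_dvd_pow_add_mul {A U K y : ℕ} (hAU : A ∣ U) (hU : U ≠ 0)
    (hK : K ≠ 0) (h : U ^ 2 ∣ A ^ y + K * U) : A ^ y ∣ U * K ^ y := by
  have hA : A ≠ 0 := by rintro rfl; exact hU (zero_dvd_iff.mp hAU)
  rcases Nat.eq_zero_or_pos y with rfl | hy
  · simp
  rw [← Nat.factorization_prime_le_iff_dvd (pow_ne_zero _ hA) (by positivity)]
  intro p hp
  simp only [Nat.factorization_pow, Nat.factorization_mul hU (pow_ne_zero _ hK),
    Finsupp.smul_apply, Finsupp.add_apply, smul_eq_mul]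
  set c := A.factorization p
  set v := U.factorization p
  set e := K.factorization p
  rcases le_or_gt c e with hce | hec
  · have := Nat.mul_le_mul_left y hce
    omega
  have hcv : c ≤ v := (Nat.factorization_le_iff_dvd hA hU).mpr hAU p
  -- Otherwise `p^(v+e+1)` divides `A^y` and `U²`, hence `KU`, whose valuation is only `v + e`.
  suffices y * c ≤ v + e by
    have := Nat.le_mul_of_pos_left e hy
    omega
  by_contra! hlt
  have hpA : p ^ (v + e + 1) ∣ A ^ y := by
    rw [hp.pow_dvd_iff_le_factorization (pow_ne_zero _ hA), Nat.factorization_pow]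
    simpa using hlt
  have hpU : p ^ (v + e + 1) ∣ U ^ 2 := by
    rw [hp.pow_dvd_iff_le_factorization (pow_ne_zero _ hU), Nat.factorization_pow]
    simp only [Finsupp.smul_apply, smul_eq_mul]
    omega
  have hpKU : p ^ (v + e + 1) ∣ K * U := (Nat.dvd_add_right hpA).mp (hpU.trans h)
  rw [hp.pow_dvd_iff_le_factorization (mul_ne_zero hK hU), Nat.factorization_mul hK hU] at hpKU
  simp only [Finsupp.add_apply] at hpKU
  omega

theorem stmt3_general (a m x y z : ℕ) (ha : 0 < a) (hm : 1 < m) (hx : 0 < x) (hy : 0 < y)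
    (h : (2*a*m+1)^x + (2*m)^y = (2*a*m-1)^z) :
    (2*a*m : ℝ) ≥ (2*m : ℝ)^y * ((x+z : ℝ))^(-(y : ℤ)) := by
  have hU : 2 * a * m ≠ 0 := by positivity
  have hMU : 2 * m ∣ 2 * a * m := ⟨a, by ring⟩
  have hZ : ((2 * a * m : ℕ) + 1 : ℤ) ^ x + ((2 * m : ℕ) : ℤ) ^ y
      = ((2 * a * m : ℕ) - 1 : ℤ) ^ z := by
    have := congrArg (Nat.cast : ℕ → ℤ) h
    push_cast [Nat.cast_sub (Nat.one_le_iff_ne_zero.mpr hU)] at this ⊢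
    exact this
  have hz := even_of_add_one_pow_add_pow_eq_sub_one_pow (Int.natCast_dvd_natCast.mpr hMU)
    (by omega) hy.ne' hZ
  have hkey : (2 * a * m) ^ 2 ∣ (2 * m) ^ y + (x + z) * (2 * a * m) := by
    exact_mod_cast sq_dvd_pow_add_mul_of_add_one_pow_add_pow_eq_sub_one_pow hz hZ
  have hle : (2 * m) ^ y ≤ 2 * a * m * (x + z) ^ y :=
    Nat.le_of_dvd (by positivity) (pow_dvd_mul_pow_of_sq_dvd_pow_add_mul hMU hU (by omega) hkey)
  rw [ge_iff_le, zpow_neg, zpow_natCast, ← div_eq_mul_inv, div_le_iff₀ (by positivity)]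
  exact_mod_cast hle

theorem stmt3 (a m x y z : ℕ) (ha : 0 < a) (hm : 1 < m) (hx : 0 < x) (hy : 0 < y)
    (hz : 0 < z) (h : (2*a*m+1)^x + (2*m)^y = (2*a*m-1)^z) :
    (2*a*m : ℝ) ≥ (2*m : ℝ)^y * ((x+z : ℝ))^(-(y : ℤ)) :=
  stmt3_general a m x y z ha hm hx hy h
end

section
/- The Diophantine equation (2am+1)^x + 2m = (2am-1)^z has no solutions in positive integers a > 1, m > 1, x, z. -/
/-!
Reduce modulo `n = 2am`: the left side is `1 + 2m` and the right side is `(-1)^z`, so `n` divides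
`2m` or `2m + 2`. Both are positive and smaller than `n` once `a, m ≥ 2`.
-/

theorem ZMod.natCast_self_sub_one {n : ℕ} (hn : 1 ≤ n) : ((n - 1 : ℕ) : ZMod n) = -1 := by
  rw [Nat.cast_sub hn, ZMod.natCast_self, zero_sub, Nat.cast_one]

theorem dvd_or_dvd_add_two_of_add_one_pow_add_eq_sub_one_pow {n c x z : ℕ} (hn : 1 ≤ n)
    (h : (n + 1) ^ x + c = (n - 1) ^ z) : n ∣ c ∨ n ∣ c + 2 := by
  have hmod : 1 + (c : ZMod n) = (-1) ^ z := by
    have := congrArg (Nat.cast : ℕ → ZMod n) h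
    rwa [Nat.cast_add, Nat.cast_pow, Nat.cast_pow, Nat.cast_succ, ZMod.natCast_self, zero_add,
      one_pow, ZMod.natCast_self_sub_one hn] at this
  simp only [← ZMod.natCast_eq_zero_iff, Nat.cast_add, Nat.cast_ofNat]
  rcases Nat.even_or_odd z with hz | hz
  · left
    rw [hz.neg_one_pow] at hmod
    linear_combination hmod
  · right
    rw [hz.neg_one_pow] at hmod
    linear_combination hmod

theorem stmt5 : ¬ ∃ (a m x z : ℕ), 1 < a ∧ 1 < m ∧ 0 < x ∧ 0 < z ∧
    (2*a*m+1)^x + 2*m = (2*a*m-1)^z := by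
  rintro ⟨a, m, x, z, ha, hm, -, -, h⟩
  have hlt : 2 * m + 2 < 2 * a * m := by nlinarith
  rcases dvd_or_dvd_add_two_of_add_one_pow_add_eq_sub_one_pow (by omega) h with hdvd | hdvd <;>
    exact absurd (Nat.le_of_dvd (by omega) hdvd) (by omega)
end

section
/- The Diophantine equation (2a+1)^x + 2 = (2a-1)^z with a > 1 in positive integers x, z has only the solution (a, x, z) = (2, 2, 3). -/
/-!
Modulo `2a` the equation reads `3 ≡ (-1)^z`, so `2a` divides `2` or `4`, forcing `a = 2` and
leaving `5^x + 2 = 3^z`. For `x ≥ 3` a chain of congruences is contradictory: modulo `125`,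
`3^z ≡ 2` gives `z ≡ 43 (mod 100)`; modulo `101` (where `3` has order `100` and `5` order `25`)
this gives `x ≡ 3 (mod 25)`; modulo `401` (where `5` has order `25` and `3` order `400`) it then
gives `z ≡ 299 (mod 400)`, contradicting `z ≡ 43 (mod 100)`.
-/

lemma Int.three_modEq_neg_one_pow {a : ℤ} {x z : ℕ} (h : (2 * a + 1) ^ x + 2 = (2 * a - 1) ^ z) :
    3 ≡ (-1) ^ z [ZMOD 2 * a] := by
  have hplus : 2 * a + 1 ≡ 1 [ZMOD 2 * a] := Int.modEq_iff_dvd.mpr ⟨-1, by ring⟩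
  have hminus : 2 * a - 1 ≡ -1 [ZMOD 2 * a] := Int.modEq_iff_dvd.mpr ⟨-1, by ring⟩
  calc (3 : ℤ) = 1 ^ x + 2 := by norm_num
    _ ≡ (2 * a + 1) ^ x + 2 [ZMOD 2 * a] := (hplus.pow x).symm.add_right 2
    _ = (2 * a - 1) ^ z := h
    _ ≡ (-1) ^ z [ZMOD 2 * a] := hminus.pow z

lemma Int.eq_two_of_three_modEq_neg_one_pow {a : ℤ} {z : ℕ} (ha : 1 < a)
    (h : 3 ≡ (-1) ^ z [ZMOD 2 * a]) : a = 2 := by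
  rcases neg_one_pow_eq_or ℤ z with hz | hz <;> rw [hz] at h
  · have h2 : 2 * a ≤ 2 := Int.le_of_dvd (by norm_num) (by simpa using h.symm.dvd)
    omega
  · have h4 : 2 * a ≤ 4 := Int.le_of_dvd (by norm_num) (by simpa using h.symm.dvd)
    omega

lemma mod_eq_of_pow_eq {M : Type*} [Monoid M] {g b : M} {k r n : ℕ} (hk : 0 < k) (hgk : g ^ k = 1)
    (hlog : ∀ s < k, g ^ s = b → s = r) (h : g ^ n = b) : n % k = r :=
  hlog _ (Nat.mod_lt n hk) (by rw [← pow_eq_pow_mod n hgk, h])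

set_option maxRecDepth 10000 in
lemma five_pow_add_two_ne_three_pow {x : ℕ} (hx : 3 ≤ x) (z : ℕ) : 5 ^ x + 2 ≠ 3 ^ z := by
  intro h
  have hmod (m : ℕ) : (5 : ZMod m) ^ x + 2 = 3 ^ z := by exact_mod_cast congrArg (Nat.cast : ℕ → ZMod m) h
  have hz100 : z % 100 = 43 := by
    refine mod_eq_of_pow_eq (g := (3 : ZMod 125)) (b := 2) (by norm_num) (by decide) (by decide) ?_
    rw [← hmod, pow_eq_zero_of_le hx (by decide : (5 : ZMod 125) ^ 3 = 0), zero_add]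
  have hx25 : x % 25 = 3 := by
    refine mod_eq_of_pow_eq (g := (5 : ZMod 101)) (b := 24) (by norm_num) (by decide) (by decide) ?_
    rw [eq_sub_of_add_eq (hmod 101), pow_eq_pow_mod z (by decide : (3 : ZMod 101) ^ 100 = 1), hz100]
    decide
  have hz400 : z % 400 = 299 := by
    refine mod_eq_of_pow_eq (g := (3 : ZMod 401)) (b := 127) (by norm_num) (by decide) (by decide) ?_
    rw [← hmod, pow_eq_pow_mod x (by decide : (5 : ZMod 401) ^ 25 = 1), hx25]
    decide
  omega

lemma eq_of_five_pow_add_two_eq_three_pow {x z : ℕ} (hx : 0 < x) (h : 5 ^ x + 2 = 3 ^ z) :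
    x = 2 ∧ z = 3 := by
  rcases lt_or_ge x 3 with hx3 | hx3
  · interval_cases x
    · cases z with
      | zero => norm_num at h
      | succ z => rw [pow_succ] at h; omega
    · exact ⟨rfl, Nat.pow_right_injective (by norm_num : 2 ≤ 3) (h.symm.trans (by norm_num) : 3 ^ z = 3 ^ 3)⟩
  · exact absurd h (five_pow_add_two_ne_three_pow hx3 z)

theorem stmt6_general (a x z : ℕ) (ha : 1 < a) (hx : 0 < x)
    (h : (2*a+1)^x + 2 = (2*a-1)^z) : a = 2 ∧ x = 2 ∧ z = 3 := by
  have hℤ : (2 * (a : ℤ) + 1) ^ x + 2 = (2 * (a : ℤ) - 1) ^ z := by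
    have hcast := congrArg (Nat.cast : ℕ → ℤ) h
    push_cast [Nat.cast_sub (by omega : 1 ≤ 2 * a)] at hcast
    exact hcast
  have ha2 : a = 2 := by
    exact_mod_cast Int.eq_two_of_three_modEq_neg_one_pow (by exact_mod_cast ha)
      (Int.three_modEq_neg_one_pow hℤ)
  subst ha2
  exact ⟨rfl, eq_of_five_pow_add_two_eq_three_pow hx h⟩

theorem stmt6 (a x z : ℕ) (ha : 1 < a) (hx : 0 < x) (hz : 0 < z)
    (h : (2*a+1)^x + 2 = (2*a-1)^z) : a = 2 ∧ x = 2 ∧ z = 3 :=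
  stmt6_general a x z ha hx h
end

section
/- The Diophantine equation 5^x + 2 = 3^z has only the solution (x, z) = (2, 3) in positive integers x, z. -/
/-!
For `z ≥ 4`, reducing modulo `81 = 3 ^ 4` gives `5 ^ x ≡ -2`; as `5` has order `54` modulo `81`,
this forces `x ≡ 20 (mod 54)`. Since `54 ∣ 108 = 109 - 1`, that pins down `5 ^ x ≡ 5 ^ 20 ≡ 35`
modulo `109`, so `3 ^ z ≡ 37 (mod 109)`; but `3` has order `27` modulo `109` and `37` is not
among its powers. This leaves `z ≤ 3`, where only `25 + 2 = 27` works.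
-/

theorem eq_two_and_eq_three_of_le_three {x z : ℕ} (hx : 0 < x) (hz : z ≤ 3)
    (h : 5 ^ x + 2 = 3 ^ z) : x = 2 ∧ z = 3 := by
  have h5 : 5 ∣ 5 ^ x := dvd_pow_self 5 hx.ne'
  interval_cases z
  · omega
  · omega
  · omega
  · exact ⟨Nat.pow_right_injective (by norm_num) (by omega : 5 ^ x = 5 ^ 2), rfl⟩

theorem mod_fiftyFour_eq_twenty_of_five_pow_add_two_eq_zero {x : ℕ}
    (h : (5 : ZMod 81) ^ x + 2 = 0) : x % 54 = 20 := by
  rw [pow_eq_pow_mod x (by decide : (5 : ZMod 81) ^ 54 = 1)] at h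
  have hres : ∀ r < 54, (5 : ZMod 81) ^ r + 2 = 0 → r = 20 := by decide
  exact hres _ (Nat.mod_lt x (by norm_num)) h

theorem five_pow_add_two_ne_three_pow_of_mod_fiftyFour {x : ℕ} (hx : x % 54 = 20) (z : ℕ) :
    (5 : ZMod 109) ^ x + 2 ≠ 3 ^ z := by
  rw [pow_eq_pow_mod x (by decide : (5 : ZMod 109) ^ 54 = 1), hx,
    pow_eq_pow_mod z (by decide : (3 : ZMod 109) ^ 27 = 1)]
  have hres : ∀ m < 27, (5 : ZMod 109) ^ 20 + 2 ≠ 3 ^ m := by decide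
  exact hres _ (Nat.mod_lt z (by norm_num))

theorem stmt7_general (x z : ℕ) (hx : 0 < x) (h : 5^x + 2 = 3^z) :
    x = 2 ∧ z = 3 := by
  rcases le_or_gt z 3 with hz | hz
  · exact eq_two_and_eq_three_of_le_three hx hz h
  have h81 : (5 : ZMod 81) ^ x + 2 = 0 := by
    have h81_dvd : 81 ∣ 5 ^ x + 2 := h ▸ (pow_dvd_pow 3 hz : 3 ^ 4 ∣ 3 ^ z)
    exact_mod_cast (ZMod.natCast_eq_zero_iff _ 81).mpr h81_dvd
  have h109 : (5 : ZMod 109) ^ x + 2 = 3 ^ z := by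
    exact_mod_cast congrArg (Nat.cast : ℕ → ZMod 109) h
  exact absurd h109 (five_pow_add_two_ne_three_pow_of_mod_fiftyFour
    (mod_fiftyFour_eq_twenty_of_five_pow_add_two_eq_zero h81) z)

theorem stmt7 (x z : ℕ) (hx : 0 < x) (hz : 0 < z) (h : 5^x + 2 = 3^z) :
    x = 2 ∧ z = 3 :=
  stmt7_general x z hx h
end

section
/- The Diophantine equation 3^Z - 5^X = 2 has only the solution (X, Z) = (2, 3) in positive integers X, Z. -/
/-! Since `Z ≥ 3`, reducing modulo `27` gives `5 ^ X ≡ -2`, and as `5` has order `18` modulo `27`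
this forces `X ≡ 2 (mod 18)`. If `X ≠ 2` then `X ≥ 20`, so modulo `625` we get `3 ^ Z ≡ 2`, which
forces `Z ≡ 243 (mod 500)` because `3` has order `500` modulo `625`. Modulo `251`, where
`3 ^ 500 ≡ 5 ^ 250 ≡ 1`, this leaves `5 ^ X ≡ 3 ^ 243 - 2`, a residue that no power of `5` attains. -/

theorem mod_eq_of_pow_eq_s8 {M : Type*} [Monoid M] {a b : M} {k n r₀ : ℕ} (hk : 0 < k)
    (ha : a ^ k = 1) (hunique : ∀ r < k, a ^ r = b → r = r₀) (hn : a ^ n = b) :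
    n % k = r₀ :=
  hunique _ (Nat.mod_lt n hk) (pow_eq_pow_mod n ha ▸ hn)

theorem three_le_of_three_pow_eq_five_pow_add_two {X Z : ℕ} (hX : 0 < X)
    (h : 3 ^ Z = 5 ^ X + 2) : 3 ≤ Z := by
  have h5 : 5 ∣ 5 ^ X := dvd_pow_self 5 hX.ne'
  by_contra! hZ
  interval_cases Z <;> omega

theorem mod_eighteen_of_three_pow_eq_five_pow_add_two {X Z : ℕ} (hZ : 3 ≤ Z)
    (h : 3 ^ Z = 5 ^ X + 2) : X % 18 = 2 := by
  have h27 := congrArg (Nat.cast : ℕ → ZMod 27) h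
  push_cast at h27
  rw [pow_eq_zero_of_le hZ (by decide)] at h27
  exact mod_eq_of_pow_eq_s8 (b := -2) (by norm_num) (by decide) (by decide)
    (eq_neg_of_add_eq_zero_left h27.symm)

set_option maxRecDepth 100000 in
theorem three_pow_ne_five_pow_add_two {X : ℕ} (hX : 4 ≤ X) (Z : ℕ) : 3 ^ Z ≠ 5 ^ X + 2 := by
  intro h
  have h625 := congrArg (Nat.cast : ℕ → ZMod 625) h
  push_cast at h625
  rw [pow_eq_zero_of_le hX (by decide), zero_add] at h625
  have hZ : Z % 500 = 243 := mod_eq_of_pow_eq_s8 (by norm_num) (by decide) (by decide) h625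
  have h251 := congrArg (Nat.cast : ℕ → ZMod 251) h
  push_cast at h251
  rw [pow_eq_pow_mod Z (show (3 : ZMod 251) ^ 500 = 1 by decide), hZ] at h251
  have hmiss : ∀ r < 250, (5 : ZMod 251) ^ r ≠ 3 ^ 243 - 2 := by decide
  refine hmiss (X % 250) (Nat.mod_lt _ (by norm_num)) ?_
  rw [← pow_eq_pow_mod X (show (5 : ZMod 251) ^ 250 = 1 by decide)]
  exact eq_sub_of_add_eq h251.symm

theorem stmt8_general (X Z : ℕ) (hX : 0 < X) (h : (3:ℤ)^Z - 5^X = 2) :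
    X = 2 ∧ Z = 3 := by
  have h' : 3 ^ Z = 5 ^ X + 2 := by
    have : (3 : ℤ) ^ Z = 5 ^ X + 2 := by linarith
    exact_mod_cast this
  have hX18 := mod_eighteen_of_three_pow_eq_five_pow_add_two
    (three_le_of_three_pow_eq_five_pow_add_two hX h') h'
  obtain rfl | hX4 : X = 2 ∨ 4 ≤ X := by omega
  · exact ⟨rfl, Nat.pow_right_injective (Nat.le_succ 2) (h'.trans (by norm_num) : 3 ^ Z = 3 ^ 3)⟩
  · exact (three_pow_ne_five_pow_add_two hX4 Z h').elim

theorem stmt8 (X Z : ℕ) (hX : 0 < X) (hZ : 0 < Z) (h : (3:ℤ)^Z - 5^X = 2) :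
    X = 2 ∧ Z = 3 :=
  stmt8_general X Z hX h
end

section
/- If a, m, X, Z are positive integers with a > 1 satisfying (2am-1)^Z - (2am+1)^X = 2, then a = 2, m = 1, X = 2, Z = 3. -/
/-!
Modulo `n = 2am` the equation reads `(-1)^Z - 1 ≡ 2`, so `n ∣ 4`; with `a > 1` this forces
`a = 2`, `m = 1`, and what is left is `3^Z = 5^X + 2`.

For `Z ≥ 5` this is impossible. Modulo `3^5 = 243` it gives `5^X ≡ -2`, and since `5` is a primitive
root mod `243` this pins down `X ≡ 74 (mod 162)`. Both `3` and `5` have order `27` mod `109`, and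
`27 ∣ 162`, so `5^X + 2 ≡ 5^20 + 2 ≡ 37 (mod 109)`, which is not a power of `3` mod `109`.
-/

theorem Int.dvd_four_of_sub_one_pow_sub_add_one_pow_eq_two {n : ℤ} {X Z : ℕ}
    (h : (n - 1) ^ Z - (n + 1) ^ X = 2) : n ∣ 4 := by
  have hZ : n ∣ (n - 1) ^ Z - (-1) ^ Z := by simpa using sub_dvd_pow_sub_pow (n - 1) (-1) Z
  have hX : n ∣ (n + 1) ^ X - 1 ^ X := by simpa using sub_dvd_pow_sub_pow (n + 1) 1 X
  have h3 : n ∣ 3 - (-1) ^ Z := by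
    rw [show 3 - (-1) ^ Z = ((n - 1) ^ Z - (-1) ^ Z) - ((n + 1) ^ X - 1 ^ X) by
      linear_combination -h]
    exact dvd_sub hZ hX
  rcases neg_one_pow_eq_or ℤ Z with hZ1 | hZ1 <;> rw [hZ1] at h3 <;> norm_num at h3
  · exact h3.trans (by norm_num)
  · exact h3

set_option maxRecDepth 10000 in
lemma mod_162_eq_74_of_five_pow_add_two_eq_zero {X : ℕ} (h : (5 : ZMod 243) ^ X + 2 = 0) :
    X % 162 = 74 := by
  rw [pow_eq_pow_mod X (by decide : (5 : ZMod 243) ^ 162 = 1)] at h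
  have key : ∀ r < 162, (5 : ZMod 243) ^ r + 2 = 0 → r = 74 := by decide
  exact key _ (Nat.mod_lt _ (by norm_num)) h

lemma three_pow_ne_five_pow_add_two_of_mod_162_eq_74 {X : ℕ} (hX : X % 162 = 74) (Z : ℕ) :
    (3 : ZMod 109) ^ Z ≠ 5 ^ X + 2 := by
  have hX27 : X % 27 = 20 := by omega
  rw [pow_eq_pow_mod Z (by decide : (3 : ZMod 109) ^ 27 = 1),
    pow_eq_pow_mod X (by decide : (5 : ZMod 109) ^ 27 = 1), hX27]
  have key : ∀ r < 27, (3 : ZMod 109) ^ r ≠ 5 ^ 20 + 2 := by decide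
  exact key _ (Nat.mod_lt _ (by norm_num))

lemma three_pow_ne_five_pow_add_two_of_five_le {X Z : ℕ} (hZ : 5 ≤ Z) : 3 ^ Z ≠ 5 ^ X + 2 := by
  intro h
  have h243 : (5 : ZMod 243) ^ X + 2 = 0 := by
    have h' : (3 : ZMod 243) ^ Z = 5 ^ X + 2 := by exact_mod_cast congrArg Nat.cast h
    rw [← h', ← Nat.add_sub_cancel' hZ, pow_add]
    exact mul_eq_zero_of_left (by decide) _
  exact three_pow_ne_five_pow_add_two_of_mod_162_eq_74
    (mod_162_eq_74_of_five_pow_add_two_eq_zero h243) Z (by exact_mod_cast congrArg Nat.cast h)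

lemma eq_two_and_eq_three_of_three_pow_eq_five_pow_add_two {X Z : ℕ} (hX : 0 < X)
    (h : 3 ^ Z = 5 ^ X + 2) : X = 2 ∧ Z = 3 := by
  have hZ : Z ≤ 4 := by
    by_contra! hZ
    exact three_pow_ne_five_pow_add_two_of_five_le hZ h
  have hX' : X < 3 := by
    by_contra! hX'
    have : 5 ^ 3 ≤ 5 ^ X := Nat.pow_le_pow_right (by norm_num) hX'
    have : 3 ^ Z ≤ 3 ^ 4 := Nat.pow_le_pow_right (by norm_num) hZ
    omega
  interval_cases X <;> interval_cases Z <;> simp_all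

theorem stmt11_general (a m X Z : ℕ) (ha : 1 < a) (hm : 0 < m) (hX : 0 < X)
    (h : ((2*a*m-1 : ℕ) : ℤ)^Z - ((2*a*m+1 : ℕ) : ℤ)^X = 2) :
    a = 2 ∧ m = 1 ∧ X = 2 ∧ Z = 3 := by
  have hn : 2 * a * m ∣ 4 := by
    rw [Nat.cast_sub (by nlinarith), Nat.cast_add, Nat.cast_one] at h
    exact_mod_cast Int.dvd_four_of_sub_one_pow_sub_add_one_pow_eq_two h
  have ham : a * m = 2 := by
    have := Nat.le_of_dvd (by norm_num) hn
    nlinarith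
  obtain ⟨rfl, rfl⟩ : a = 2 ∧ m = 1 := by constructor <;> nlinarith
  have h35 : (3 : ℤ) ^ Z = 5 ^ X + 2 := by norm_num at h; linarith
  exact ⟨rfl, rfl, eq_two_and_eq_three_of_three_pow_eq_five_pow_add_two hX (by exact_mod_cast h35)⟩

theorem stmt11 (a m X Z : ℕ) (ha : 1 < a) (hm : 0 < m) (hX : 0 < X) (hZ : 0 < Z)
    (h : ((2*a*m-1 : ℕ) : ℤ)^Z - ((2*a*m+1 : ℕ) : ℤ)^X = 2) :
    a = 2 ∧ m = 1 ∧ X = 2 ∧ Z = 3 :=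
  stmt11_general a m X Z ha hm hX h
end

section
/- There are no positive integers m > 1 and y ≥ 2 such that (2m/3)^y - 1 = 3^{y-2} with 3 dividing m; more precisely, the equation n^y - 1 = 3^{y-2} has no solutions in positive integers n ≥ 2 and y ≥ 2. -/
/-!
The right-hand side of `n ^ y = 3 ^ (y - 2) + 1` is even, so `n` is even. For `y = 2` this gives
`4 ∣ n ^ 2 = 2`; for `y ≥ 3` it gives `8 ∣ n ^ y`, whereas `3 ^ k ≡ 1` or `3 (mod 8)`, so
`3 ^ k + 1` is never divisible by `8`.
-/

lemma three_pow_mod_eight (k : ℕ) : 3 ^ k % 8 = 1 ∨ 3 ^ k % 8 = 3 := by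
  induction k with
  | zero => left; rfl
  | succ k ih => rcases ih with h | h <;> simp [pow_succ, Nat.mul_mod, h]

lemma not_eight_dvd_three_pow_add_one (k : ℕ) : ¬ 8 ∣ 3 ^ k + 1 := by
  rcases three_pow_mod_eight k with h | h <;> omega

theorem stmt12 : ¬ ∃ (n y : ℕ), 2 ≤ n ∧ 2 ≤ y ∧ n^y - 1 = 3^(y-2) := by
  rintro ⟨n, y, hn, hy, h⟩
  have heq : n ^ y = 3 ^ (y - 2) + 1 := by
    have := Nat.one_le_pow y n (by omega)
    omega
  have two_dvd_n : 2 ∣ n := by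
    have : Even (n ^ y) := heq ▸ (Odd.pow (by decide)).add_one
    exact even_iff_two_dvd.mp (Nat.even_pow.mp this).1
  obtain rfl | hy3 : y = 2 ∨ 3 ≤ y := by omega
  · have : 2 ^ 2 ∣ n ^ 2 := pow_dvd_pow_of_dvd two_dvd_n 2
    rw [heq] at this
    norm_num at this
  · apply not_eight_dvd_three_pow_add_one (y - 2)
    rw [← heq]
    exact (pow_dvd_pow_of_dvd two_dvd_n 3).trans (pow_dvd_pow n hy3)
end

section
/- If a is an even positive integer and (a, x, y, z) is a solution in positive integers of (2a+1)^x + 2^y = (2a-1)^z with y > 1 and x odd, then z is even, a = 2^{y-1}, and (x, y, z) = (1, 2, 2); that is, the only such solution is 5^1 + 2^2 = 3^2. -/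
/-!
Write `t = 2a`, so the equation reads `(t + 1)^x + 2^y = (t - 1)^z` with `4 ∣ t`. Modulo 4 it
forces `z` even; then modulo `t` it gives `t ∣ 2^y`, so `t = 2^m`. Expanding both powers modulo
`t^2` gives `t^2 ∣ 2^y + (x + z) t` with `x + z` odd, and comparing 2-adic valuations yields
`y = m`, i.e. `a = 2^(y-1)`. Modulo `2^y - 1` the equation becomes `2^y - 1 ∣ 2^x + 1`, which
forces `y = 2`. Finally `5^x + 4 = 3^(2w)` factors as `(3^w - 2)(3^w + 2) = 5^x`, and two powers
of 5 differing by 4 must be 1 and 5.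
-/

theorem Int.one_add_pow_modEq (t : ℤ) (n : ℕ) : (1 + t) ^ n ≡ 1 + n * t [ZMOD t ^ 2] :=
  (Int.modEq_iff_dvd.mpr <| by
    simpa [sub_sub, mul_comm, add_comm] using sq_dvd_add_pow_sub_sub t 1 n).symm

section AddTwoPowEq

variable {t : ℤ} {x y z : ℕ}

theorem even_of_add_two_pow_eq (ht : 4 ∣ t) (hy : 2 ≤ y)
    (h : (t + 1) ^ x + 2 ^ y = (t - 1) ^ z) : Even z := by
  have ht0 : t ≡ 0 [ZMOD 4] := Int.modEq_zero_iff_dvd.mpr ht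
  have h2y : (2 : ℤ) ^ y ≡ 0 [ZMOD 4] :=
    Int.modEq_zero_iff_dvd.mpr (by simpa using pow_dvd_pow (2 : ℤ) hy)
  have key : (1 : ℤ) ≡ (-1) ^ z [ZMOD 4] := by
    calc (1 : ℤ) = (0 + 1) ^ x + 0 := by simp
      _ ≡ (t + 1) ^ x + 2 ^ y [ZMOD 4] := ((ht0.symm.add_right 1).pow x).add h2y.symm
      _ = (t - 1) ^ z := h
      _ ≡ (0 - 1) ^ z [ZMOD 4] := (ht0.sub_right 1).pow z
      _ = (-1) ^ z := by simp
  rcases Nat.even_or_odd z with hz | hz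
  · exact hz
  · rw [hz.neg_one_pow] at key
    exact absurd key (by decide)

theorem dvd_two_pow_of_add_two_pow_eq (hz : Even z)
    (h : (t + 1) ^ x + 2 ^ y = (t - 1) ^ z) : t ∣ 2 ^ y := by
  have ht0 : t ≡ 0 [ZMOD t] := Int.modEq_zero_iff_dvd.mpr dvd_rfl
  have key : 1 + 2 ^ y ≡ 1 + 0 [ZMOD t] := by
    calc 1 + 2 ^ y = (0 + 1) ^ x + (2 : ℤ) ^ y := by simp
      _ ≡ (t + 1) ^ x + 2 ^ y [ZMOD t] := ((ht0.symm.add_right 1).pow x).add_right _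
      _ = (t - 1) ^ z := h
      _ ≡ (0 - 1) ^ z [ZMOD t] := (ht0.sub_right 1).pow z
      _ = 1 + 0 := by simp [hz.neg_one_pow]
  exact Int.modEq_zero_iff_dvd.mp (Int.ModEq.add_left_cancel' 1 key)

theorem sq_dvd_two_pow_add_mul_of_add_two_pow_eq (hz : Even z)
    (h : (t + 1) ^ x + 2 ^ y = (t - 1) ^ z) : t ^ 2 ∣ 2 ^ y + (x + z) * t := by
  have key : 1 + x * t + 2 ^ y ≡ 1 - z * t [ZMOD t ^ 2] := by
    calc 1 + x * t + 2 ^ y ≡ (1 + t) ^ x + 2 ^ y [ZMOD t ^ 2] :=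
          (Int.one_add_pow_modEq t x).symm.add_right _
      _ = (1 + -t) ^ z := by rw [add_comm 1 t, h, ← hz.neg_pow, neg_sub, sub_eq_add_neg]
      _ ≡ 1 + z * -t [ZMOD t ^ 2] := by simpa using Int.one_add_pow_modEq (-t) z
      _ = 1 - z * t := by ring
  have := key.dvd
  rw [show 1 - z * t - (1 + x * t + 2 ^ y) = -(2 ^ y + (x + z) * t) by ring] at this
  exact dvd_neg.mp this

end AddTwoPowEq

theorem Nat.le_of_two_pow_dvd_two_pow_mul_odd {n k o : ℕ} (ho : Odd o)
    (h : 2 ^ n ∣ 2 ^ k * o) : n ≤ k :=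
  (Nat.pow_dvd_pow_iff_le_right one_lt_two).mp
    ((Nat.coprime_two_left.mpr ho).pow_left n |>.dvd_of_dvd_mul_right h)

theorem Nat.eq_of_two_pow_sq_dvd_two_pow_add_odd_mul {m y s : ℕ} (hm : 0 < m) (hs : Odd s)
    (h : (2 ^ m) ^ 2 ∣ 2 ^ y + s * 2 ^ m) : y = m := by
  rw [← pow_mul] at h
  rcases lt_trichotomy y m with hlt | heq | hgt
  · have hsplit : 2 ^ y + s * 2 ^ m = 2 ^ y * (1 + s * 2 ^ (m - y)) := by
      rw [mul_add, mul_one, mul_left_comm, ← pow_add, Nat.add_sub_cancel' hlt.le]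
    have hodd : Odd (1 + s * 2 ^ (m - y)) :=
      ((Nat.even_pow.mpr ⟨even_two, by omega⟩).mul_left s).one_add
    have := Nat.le_of_two_pow_dvd_two_pow_mul_odd hodd (hsplit ▸ h)
    omega
  · exact heq
  · have hsplit : 2 ^ y + s * 2 ^ m = 2 ^ m * (2 ^ (y - m) + s) := by
      rw [mul_add, ← pow_add, Nat.add_sub_cancel' hgt.le, mul_comm]
    have hodd : Odd (2 ^ (y - m) + s) := (Nat.even_pow.mpr ⟨even_two, by omega⟩).add_odd hs
    have := Nat.le_of_two_pow_dvd_two_pow_mul_odd hodd (hsplit ▸ h)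
    omega

theorem Nat.two_pow_sub_one_dvd_two_pow_add_one {x y z : ℕ} (hz : z ≠ 0)
    (h : (2 ^ y + 1) ^ x + 2 ^ y = (2 ^ y - 1) ^ z) : 2 ^ y - 1 ∣ 2 ^ x + 1 := by
  have hN : 2 ^ y ≡ 1 [MOD 2 ^ y - 1] := Nat.modEq_sub Nat.one_le_two_pow
  have key : (2 ^ y + 1) ^ x + 2 ^ y ≡ 2 ^ x + 1 [MOD 2 ^ y - 1] :=
    (hN.add_right 1).pow x |>.add hN
  exact (key.dvd_iff dvd_rfl).mp (h ▸ dvd_pow_self _ hz)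

theorem Nat.le_two_of_two_pow_sub_one_dvd_two_pow_add_one {x y : ℕ}
    (h : 2 ^ y - 1 ∣ 2 ^ x + 1) : y ≤ 2 := by
  by_contra! hy
  have hN : 2 ^ y ≡ 1 [MOD 2 ^ y - 1] := Nat.modEq_sub Nat.one_le_two_pow
  have hred : 2 ^ x ≡ 2 ^ (x % y) [MOD 2 ^ y - 1] := by
    calc 2 ^ x = (2 ^ y) ^ (x / y) * 2 ^ (x % y) := by
          rw [← pow_mul, ← pow_add, Nat.div_add_mod]
      _ ≡ 1 ^ (x / y) * 2 ^ (x % y) [MOD 2 ^ y - 1] := (hN.pow _).mul_right _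
      _ = 2 ^ (x % y) := by simp
  have hle := Nat.le_of_dvd (by positivity) (((hred.add_right 1).dvd_iff dvd_rfl).mp h)
  have h1 : 2 ^ (x % y) ≤ 2 ^ (y - 1) :=
    Nat.pow_le_pow_right two_pos (Nat.le_sub_one_of_lt (Nat.mod_lt x (by omega)))
  have h2 : 2 ^ y = 2 * 2 ^ (y - 1) := by rw [← pow_succ']; congr 1; omega
  have h3 : 2 ^ 2 ≤ 2 ^ (y - 1) := Nat.pow_le_pow_right two_pos (by omega)
  omega

theorem Nat.eq_of_five_pow_add_four_eq_three_pow {x z : ℕ} (hz : Even z)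
    (h : 5 ^ x + 4 = 3 ^ z) : x = 1 ∧ z = 2 := by
  obtain ⟨w, rfl⟩ := hz
  have hw : w ≠ 0 := by rintro rfl; simp at h
  rw [pow_add] at h
  generalize hs : 3 ^ w = s at h
  have hs3 : 3 ≤ s := hs ▸ Nat.le_self_pow hw 3
  have hfac : (s - 2) * (s + 2) = 5 ^ x := by
    zify [show 2 ≤ s by omega]
    linear_combination (by exact_mod_cast h.symm : ((s : ℤ) * s = 5 ^ x + 4))
  obtain ⟨i, -, hi⟩ := (Nat.dvd_prime_pow Nat.prime_five).mp (Dvd.intro _ hfac)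
  obtain ⟨j, -, hj⟩ := (Nat.dvd_prime_pow Nat.prime_five).mp (Dvd.intro_left _ hfac)
  -- `s - 2` and `s + 2` differ by 4, so they cannot both be divisible by 5
  have hi0 : i = 0 := by
    by_contra hi0
    have hj0 : j ≠ 0 := by rintro rfl; simp at hj
    have h5 := hi ▸ dvd_pow_self 5 hi0
    have h5' := hj ▸ dvd_pow_self 5 hj0
    omega
  obtain rfl : s = 3 := by simp [hi0] at hi; omega
  obtain rfl : w = 1 := (Nat.pow_eq_self_iff (by norm_num)).mp hs
  exact ⟨(Nat.pow_eq_self_iff (a := 5) (by norm_num)).mp (by omega), rfl⟩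

theorem stmt15_general (a x y z : ℕ) (ha : 1 < a) (haeven : Even a)
    (hy : 1 < y) (hz : 0 < z) (hxodd : Odd x)
    (h : (2*a+1)^x + 2^y = (2*a-1)^z) :
    Even z ∧ a = 2^(y-1) ∧ x = 1 ∧ y = 2 ∧ z = 2 := by
  have hZ : ((2 * a : ℕ) + 1 : ℤ) ^ x + 2 ^ y = ((2 * a : ℕ) - 1 : ℤ) ^ z := by
    have := h
    zify [show 1 ≤ 2 * a by omega] at this
    exact_mod_cast this
  have h4 : (4 : ℤ) ∣ ((2 * a : ℕ) : ℤ) := by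
    exact_mod_cast Nat.mul_dvd_mul_left 2 (even_iff_two_dvd.mp haeven)
  have hzeven : Even z := even_of_add_two_pow_eq h4 hy hZ
  obtain ⟨m, -, hm⟩ := (Nat.dvd_prime_pow Nat.prime_two).mp
    (Int.natCast_dvd_natCast.mp (by exact_mod_cast dvd_two_pow_of_add_two_pow_eq hzeven hZ))
  have hym : y = m := by
    refine Nat.eq_of_two_pow_sq_dvd_two_pow_add_odd_mul (Nat.pos_of_ne_zero ?_)
      (hxodd.add_even hzeven) ?_
    · rintro rfl; omega
    · rw [← hm]
      exact_mod_cast sq_dvd_two_pow_add_mul_of_add_two_pow_eq hzeven hZ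
  subst hym
  rw [hm] at h
  obtain rfl : y = 2 := le_antisymm
    (Nat.le_two_of_two_pow_sub_one_dvd_two_pow_add_one
      (Nat.two_pow_sub_one_dvd_two_pow_add_one hz.ne' h)) hy
  obtain rfl : a = 2 := by omega
  norm_num at h
  obtain ⟨rfl, rfl⟩ := Nat.eq_of_five_pow_add_four_eq_three_pow hzeven h
  exact ⟨hzeven, rfl, rfl, rfl, rfl⟩

theorem stmt15 (a x y z : ℕ) (ha : 1 < a) (haeven : Even a) (hx : 0 < x)
    (hy : 1 < y) (hz : 0 < z) (hxodd : Odd x)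
    (h : (2*a+1)^x + 2^y = (2*a-1)^z) :
    Even z ∧ a = 2^(y-1) ∧ x = 1 ∧ y = 2 ∧ z = 2 :=
  stmt15_general a x y z ha haeven hy hz hxodd h
end

section
/- If (a, m, x, y, z) is a solution in positive integers of (2am+1)^x + (2m)^y = (2am-1)^z with a > 1, m > 1, x odd, z even, and (2am+1)^x > (2m)^y, then x > (2am-1)/2, hence x ≥ am. -/
/-!
Write `c = 2am - 1`, so the equation reads `(c + 2)^x + (2m)^y = c^z`. Since `(2m)^y > 0` we get
`z > x`, and since `(2m)^y < (c + 2)^x` we get `c^(x+1) ≤ c^z < 2 (c + 2)^x`. On the other hand,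
if `2x ≤ c` then `(1 + 2/c)^x ≤ e^(2x/c) ≤ e < c/2`, i.e. `2 (c + 2)^x < c^(x+1)`, a contradiction;
hence `2x > c`.
-/

open Real

theorem add_pow_le_pow_mul_exp {b t : ℝ} (hb : 0 < b) (hbt : 0 ≤ b + t) (n : ℕ) :
    (b + t) ^ n ≤ b ^ n * exp (t * n / b) := by
  have hfac : b + t = b * (1 + t / b) := by field_simp
  have hbase : (1 + t / b) ^ n ≤ exp (t * n / b) :=
    calc (1 + t / b) ^ n ≤ exp (t / b) ^ n := by
          gcongr
          · rw [hfac] at hbt; exact nonneg_of_mul_nonneg_right (by linarith) hb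
          · linarith [add_one_le_exp (t / b)]
      _ = exp (t * n / b) := by rw [← exp_nat_mul]; ring_nf
  rw [hfac, mul_pow]
  gcongr

theorem two_mul_add_two_pow_le_pow_succ {c x : ℕ} (hc : 6 ≤ c) (hx : 2 * x ≤ c) :
    2 * (c + 2) ^ x ≤ c ^ (x + 1) := by
  have hcR : (6 : ℝ) ≤ c := by exact_mod_cast hc
  have hxR : (2 * x : ℝ) ≤ c := by exact_mod_cast hx
  have hexp : exp (2 * x / c) ≤ exp 1 :=
    exp_le_exp.mpr ((div_le_one (by linarith)).mpr hxR)
  have he : exp 1 < 3 := by linarith [exp_one_lt_d9]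
  have hpow : ((c : ℝ) + 2) ^ x ≤ (c : ℝ) ^ x * exp 1 :=
    (add_pow_le_pow_mul_exp (by linarith) (by linarith) x).trans (by gcongr)
  have hcx : (0 : ℝ) < (c : ℝ) ^ x := by positivity
  suffices (2 * (c + 2) ^ x : ℝ) ≤ (c : ℝ) ^ (x + 1) by exact_mod_cast this
  rw [pow_succ]
  nlinarith

theorem lt_of_add_two_pow_add_eq_pow {c x z d : ℕ} (hd : 0 < d) (h : (c + 2) ^ x + d = c ^ z) :
    x < z := by
  by_contra! hzx
  have : c ^ z ≤ (c + 2) ^ x :=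
    (Nat.pow_le_pow_left (by omega) z).trans (Nat.pow_le_pow_right (by omega) hzx)
  omega

theorem pow_succ_lt_two_mul_add_two_pow {c x z d : ℕ} (hc : 0 < c) (hd : 0 < d)
    (hdx : d < (c + 2) ^ x) (h : (c + 2) ^ x + d = c ^ z) :
    c ^ (x + 1) < 2 * (c + 2) ^ x := by
  have : c ^ (x + 1) ≤ c ^ z := Nat.pow_le_pow_right hc (lt_of_add_two_pow_add_eq_pow hd h)
  omega

theorem lt_two_mul_of_add_two_pow_add_eq_pow {c x z d : ℕ} (hc : 6 ≤ c) (hd : 0 < d)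
    (hdx : d < (c + 2) ^ x) (h : (c + 2) ^ x + d = c ^ z) :
    c < 2 * x := by
  by_contra! hx
  have := two_mul_add_two_pow_le_pow_succ hc hx
  have := pow_succ_lt_two_mul_add_two_pow (by omega) hd hdx h
  omega

theorem stmt18_general (a m x y z : ℕ) (ha : 1 < a) (hm : 1 < m)
    (h : (2*a*m+1)^x + (2*m)^y = (2*a*m-1)^z)
    (hbig : (2*a*m+1)^x > (2*m)^y) :
    (x : ℚ) > (2*a*m - 1 : ℚ)/2 ∧ x ≥ a*m := by
  have ham : 4 ≤ a * m := by nlinarith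
  have hN : 2*a*m = 2 * (a * m) := by ring
  have hshift : 2*a*m + 1 = (2*a*m - 1) + 2 := by omega
  rw [hshift] at h hbig
  have hx := lt_two_mul_of_add_two_pow_add_eq_pow (by omega) (by positivity) hbig h
  have hxQ : ((2*a*m - 1 : ℕ) : ℚ) < 2 * x := by exact_mod_cast hx
  push_cast [show 1 ≤ 2*a*m by omega] at hxQ
  exact ⟨by linarith, by omega⟩

theorem stmt18 (a m x y z : ℕ) (ha : 1 < a) (hm : 1 < m) (hx : 0 < x) (hy : 0 < y)
    (hz : 0 < z) (hxodd : Odd x) (hzeven : Even z)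
    (h : (2*a*m+1)^x + (2*m)^y = (2*a*m-1)^z)
    (hbig : (2*a*m+1)^x > (2*m)^y) :
    (x : ℚ) > (2*a*m - 1 : ℚ)/2 ∧ x ≥ a*m :=
  stmt18_general a m x y z ha hm h hbig
end
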